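/- For every n ≥ 1, every tuning parameter η_n > 0 and every δ with 0 < δ < 1: the equation Φ(n^{1/2}(a − η_n)) − Φ(−n^{1/2} a) = δ has a unique solution a_{n,H}* in [0, ∞), this solution satisfies a_{n,H}* > η_n/2, the interval [θ̂_H − a_{n,H}*, θ̂_H + a_{n,H}*] has infimal coverage probability inf_{θ∈ℝ} P_{n,θ}(θ ∈ [θ̂_H − a_{n,H}*, θ̂_H + a_{n,H}*]) exactly equal to δ, and among all pairs (a, b) of nonnegative reals for which inf_{θ∈ℝ} P_{n,θ}(θ ∈ [θ̂_H − a, θ̂_H + b]) ≥ δ the length a + b is uniquely minimized at a = b = a_{n,H}*. -/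

import Mathlib

/-!
Write `c = √n`. For `θ < -a` the interval `[θ̂_H - a, θ̂_H + b]` can only cover `θ` when
`ȳ ∈ [θ - b, -η]`, so letting `θ ↑ -a` bounds the infimal coverage by
`Φ(c(a - η)) - Φ(-cb)`; for `a = b ≥ η/2` this bound is attained, which pins down `a*`.
If `a < b`, replacing both half-lengths by `m = (a + b)/2` trades the window `[-cb, -cm]`
for `[c(a - η), c(m - η)]`, a window of the same length lying nearer the origin and hence of
strictly larger standard normal mass. So every `δ`-level interval has `m ≥ a*`, with
equality only if `a = b = a*`.
-/

open MeasureTheory ProbabilityTheory Filter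
open scoped NNReal

/-- Standard normal cumulative distribution function Φ. -/
noncomputable def stdNormCDF (x : ℝ) : ℝ :=
  ((gaussianReal 0 1) (Set.Iic x)).toReal

/-- Soft-thresholding (LASSO) estimator with threshold η, as a function of ȳ. -/
noncomputable def softThresh (η y : ℝ) : ℝ := Real.sign y * max (|y| - η) 0

/-- Hard-thresholding estimator with threshold η, as a function of ȳ. -/
noncomputable def hardThresh (η y : ℝ) : ℝ := if η < |y| then y else 0

/-- Adaptive LASSO estimator with tuning parameter η, as a function of ȳ. -/
noncomputable def adaLasso (η y : ℝ) : ℝ := if |y| ≤ η then 0 else y - η ^ 2 / y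

/-- Coverage probability `P_{n,θ}(θ ∈ [est(ȳ) - a, est(ȳ) + b])` in the
known-variance case (σ = 1), where ȳ ~ N(θ, 1/n). -/
noncomputable def cover (n : ℕ) (est : ℝ → ℝ) (a b θ : ℝ) : ℝ :=
  ((gaussianReal θ ((n : ℝ≥0))⁻¹)
    {y : ℝ | est y - a ≤ θ ∧ θ ≤ est y + b}).toReal

open Set Topology

lemma gaussianPDFReal_lt_of_sq_lt {μ : ℝ} {v : ℝ≥0} (hv : v ≠ 0) {x y : ℝ}
    (h : (x - μ) ^ 2 < (y - μ) ^ 2) : gaussianPDFReal μ v y < gaussianPDFReal μ v x := by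
  have hv' : (0 : ℝ) < v := by positivity
  simp only [gaussianPDFReal_def]
  gcongr

lemma stdNormCDF_sub (x y : ℝ) :
    stdNormCDF y - stdNormCDF x = ∫ t in x..y, gaussianPDFReal 0 1 t := by
  have hIic (z : ℝ) : stdNormCDF z = ∫ t in Iic z, gaussianPDFReal 0 1 t := by
    rw [stdNormCDF, gaussianReal_apply_eq_integral 0 one_ne_zero,
      ENNReal.toReal_ofReal (integral_nonneg fun t => gaussianPDFReal_nonneg 0 1 t)]
  rw [hIic, hIic, intervalIntegral.integral_Iic_sub_Iic
    (integrable_gaussianPDFReal 0 1).integrableOn (integrable_gaussianPDFReal 0 1).integrableOn]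

lemma stdNormCDF_strictMono : StrictMono stdNormCDF := fun x y hxy => by
  have := intervalIntegral.intervalIntegral_pos_of_pos
    (integrable_gaussianPDFReal 0 1).intervalIntegrable
    (fun t => gaussianPDFReal_pos 0 1 t one_ne_zero) hxy
  linarith [stdNormCDF_sub x y]

@[fun_prop]
lemma continuous_stdNormCDF : Continuous stdNormCDF := by
  have h : stdNormCDF = fun x => stdNormCDF 0 + ∫ t in (0 : ℝ)..x, gaussianPDFReal 0 1 t := by
    funext x
    linarith [stdNormCDF_sub 0 x]
  rw [h]
  exact continuous_const.add ((integrable_gaussianPDFReal 0 1).continuous_primitive 0)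

lemma stdNormCDF_eq_cdf : stdNormCDF = cdf (gaussianReal 0 1) :=
  funext fun x => (cdf_eq_real _ x).symm

lemma tendsto_stdNormCDF_atTop : Tendsto stdNormCDF atTop (𝓝 1) :=
  stdNormCDF_eq_cdf ▸ tendsto_cdf_atTop _

lemma tendsto_stdNormCDF_atBot : Tendsto stdNormCDF atBot (𝓝 0) :=
  stdNormCDF_eq_cdf ▸ tendsto_cdf_atBot _

/-- A window of width `T` placed nearer the origin carries more mass:
`(p + τ)² - (r + τ)² = (p - r)(p + r + 2τ) < 0` for `0 < τ < T`. -/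
lemma stdNormCDF_window_lt {p r T : ℝ} (hT : 0 < T) (hrp : r < p) (hpr : p + r + 2 * T ≤ 0) :
    stdNormCDF (r + T) - stdNormCDF r < stdNormCDF (p + T) - stdNormCDF p := by
  have hint (s : ℝ) : IntervalIntegrable (fun τ => gaussianPDFReal 0 1 (s + τ)) volume 0 T :=
    ((integrable_gaussianPDFReal 0 1).comp_add_left s).intervalIntegrable
  have hshift (s : ℝ) :
      stdNormCDF (s + T) - stdNormCDF s = ∫ τ in (0 : ℝ)..T, gaussianPDFReal 0 1 (s + τ) := by
    rw [stdNormCDF_sub, intervalIntegral.integral_comp_add_left, add_zero]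
  rw [hshift, hshift, ← sub_pos, ← intervalIntegral.integral_sub (hint p) (hint r)]
  refine intervalIntegral.intervalIntegral_pos_of_pos_on ((hint p).sub (hint r)) ?_ hT
  rintro τ ⟨-, hτT⟩
  have hsq : (p + τ - 0) ^ 2 < (r + τ - 0) ^ 2 := by nlinarith
  exact sub_pos.2 (gaussianPDFReal_lt_of_sq_lt one_ne_zero hsq)

section GaussianIntervals

variable (μ : ℝ) {v : ℝ≥0} (hv : v ≠ 0)
include hv

lemma gaussianReal_real_Iic (x : ℝ) :
    (gaussianReal μ v).real (Iic x) = stdNormCDF ((x - μ) / √v) := by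
  have hσ : 0 < √(v : ℝ) := Real.sqrt_pos.2 (by positivity)
  have hstd : (gaussianReal μ v).map (fun y => (y - μ) / √v) = gaussianReal 0 1 := by
    have hcomp : (fun y => (y - μ) / √v) = (· / √v) ∘ (· - μ) := rfl
    rw [hcomp, ← Measure.map_map (by fun_prop) (by fun_prop), gaussianReal_map_sub_const,
      gaussianReal_map_div_const, sub_self, zero_div]
    congr
    ext
    simp [Real.sq_sqrt, hv]
  have hpre : (fun y => (y - μ) / √v) ⁻¹' Iic ((x - μ) / √v) = Iic x := by
    ext y
    simp [div_le_div_iff_of_pos_right hσ]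
  rw [← hpre, ← map_measureReal_apply (by fun_prop) measurableSet_Iic, hstd]
  rfl

lemma gaussianReal_real_Ioc {x y : ℝ} (hxy : x ≤ y) :
    (gaussianReal μ v).real (Ioc x y) =
      stdNormCDF ((y - μ) / √v) - stdNormCDF ((x - μ) / √v) := by
  rw [← Iic_sdiff_Iic, measureReal_sdiff (Iic_subset_Iic.2 hxy) measurableSet_Iic,
    gaussianReal_real_Iic μ hv, gaussianReal_real_Iic μ hv]

lemma gaussianReal_real_Icc {x y : ℝ} (hxy : x ≤ y) :
    (gaussianReal μ v).real (Icc x y) =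
      stdNormCDF ((y - μ) / √v) - stdNormCDF ((x - μ) / √v) := by
  have := nullSingletonClass_gaussianReal (μ := μ) hv
  rw [← measureReal_congr Ioc_ae_eq_Icc, gaussianReal_real_Ioc μ hv hxy]

lemma gaussianReal_real_Ioo {x y : ℝ} (hxy : x ≤ y) :
    (gaussianReal μ v).real (Ioo x y) =
      stdNormCDF ((y - μ) / √v) - stdNormCDF ((x - μ) / √v) := by
  have := nullSingletonClass_gaussianReal (μ := μ) hv
  rw [measureReal_congr Ioo_ae_eq_Ioc, gaussianReal_real_Ioc μ hv hxy]

end GaussianIntervals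

lemma div_sqrt_natCast_inv (n : ℕ) (z : ℝ) :
    z / √(((n : ℝ≥0)⁻¹ : ℝ≥0) : ℝ) = √n * z := by
  simp [Real.sqrt_inv, mul_comm]

/-- For `a ≥ η / 2` this is the infimal coverage probability of `[θ̂_H - a, θ̂_H + a]`,
approached as `θ ↑ -a`. -/
noncomputable def hardCoverageLevel (n : ℕ) (η a : ℝ) : ℝ :=
  stdNormCDF (√n * (a - η)) - stdNormCDF (-(√n * a))

section CoverageLevel

variable {n : ℕ} (hn : n ≠ 0) (η : ℝ)

lemma continuous_hardCoverageLevel : Continuous (hardCoverageLevel n η) := by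
  unfold hardCoverageLevel
  fun_prop

include hn in
lemma hardCoverageLevel_strictMono : StrictMono (hardCoverageLevel n η) := fun a b hab => by
  have hc : 0 < √(n : ℝ) := Real.sqrt_pos.2 (by positivity)
  have h₁ := stdNormCDF_strictMono (show √n * (a - η) < √n * (b - η) by nlinarith)
  have h₂ := stdNormCDF_strictMono (show -(√n * b) < -(√n * a) by nlinarith)
  unfold hardCoverageLevel
  linarith

lemma hardCoverageLevel_half : hardCoverageLevel n η (η / 2) = 0 := by
  rw [hardCoverageLevel, show √n * (η / 2 - η) = -(√n * (η / 2)) by ring, sub_self]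

include hn in
lemma tendsto_hardCoverageLevel_atTop : Tendsto (hardCoverageLevel n η) atTop (𝓝 1) := by
  have hc : 0 < √(n : ℝ) := Real.sqrt_pos.2 (by positivity)
  have h₁ : Tendsto (fun a => √n * (a - η)) atTop atTop :=
    (tendsto_atTop_add_const_right _ _ tendsto_id).const_mul_atTop hc
  have h₂ : Tendsto (fun a => -(√n * a)) atTop atBot :=
    tendsto_neg_atTop_atBot.comp (tendsto_id.const_mul_atTop hc)
  have := (tendsto_stdNormCDF_atTop.comp h₁).sub (tendsto_stdNormCDF_atBot.comp h₂)
  rwa [sub_zero] at this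

include hn in
lemma exists_hardCoverageLevel_eq (hη : 0 ≤ η) {δ : ℝ} (hδ0 : 0 < δ) (hδ1 : δ < 1) :
    ∃ a, 0 ≤ a ∧ hardCoverageLevel n η a = δ := by
  have h₀ : hardCoverageLevel n η 0 < δ := by
    have := (hardCoverageLevel_strictMono hn η).monotone (by linarith : (0 : ℝ) ≤ η / 2)
    rw [hardCoverageLevel_half] at this
    linarith
  obtain ⟨M, hM, hM0⟩ :=
    (((tendsto_hardCoverageLevel_atTop hn η).eventually (eventually_gt_nhds hδ1)).and
      (eventually_ge_atTop 0)).exists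
  obtain ⟨a, ha, hfa⟩ := intermediate_value_Icc hM0
    (continuous_hardCoverageLevel η).continuousOn ⟨h₀.le, hM.le⟩
  exact ⟨a, ha.1, hfa⟩

end CoverageLevel

lemma hardThresh_neg (η y : ℝ) : hardThresh η (-y) = -hardThresh η y := by
  simp only [hardThresh, abs_neg]
  split_ifs <;> simp

lemma measurable_hardThresh (η : ℝ) : Measurable (hardThresh η) :=
  Measurable.ite (measurableSet_lt measurable_const measurable_abs) measurable_id measurable_const

lemma cover_eq_real_preimage (n : ℕ) (est : ℝ → ℝ) (a b θ : ℝ) :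
    cover n est a b θ =
      (gaussianReal θ (n : ℝ≥0)⁻¹).real (est ⁻¹' Icc (θ - b) (θ + a)) := by
  rw [cover, measureReal_def]
  congr 2
  ext y
  simp only [mem_ofPred_eq, mem_preimage, mem_Icc]
  constructor <;> rintro ⟨h₁, h₂⟩ <;> constructor <;> linarith

lemma cover_hardThresh_swap (n : ℕ) (η a b θ : ℝ) :
    cover n (hardThresh η) a b θ = cover n (hardThresh η) b a (-θ) := by
  have hpre : (fun y => -y) ⁻¹' (hardThresh η ⁻¹' Icc (-θ - a) (-θ + b))
      = hardThresh η ⁻¹' Icc (θ - b) (θ + a) := by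
    ext y
    simp only [mem_preimage, mem_Icc, hardThresh_neg]
    constructor <;> rintro ⟨h₁, h₂⟩ <;> constructor <;> linarith
  rw [cover_eq_real_preimage, cover_eq_real_preimage, ← gaussianReal_map_neg,
    map_measureReal_apply measurable_neg (measurable_hardThresh η measurableSet_Icc), hpre]

lemma iInf_cover_hardThresh_swap (n : ℕ) (η a b : ℝ) :
    ⨅ θ, cover n (hardThresh η) a b θ = ⨅ θ, cover n (hardThresh η) b a θ := by
  simp only [cover_hardThresh_swap n η a b]
  exact neg_surjective.iInf_comp (cover n (hardThresh η) b a)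

section Coverage

variable {n : ℕ} (hn : n ≠ 0)
include hn

/-- For `θ < -a` the estimate must be a nonzero `ȳ < -η`, so it covers `θ` only if
`ȳ ∈ [θ - b, -η]`. -/
lemma cover_hardThresh_le_of_lt_neg (η : ℝ) {a b θ : ℝ} (hθ : θ < -a) :
    cover n (hardThresh η) a b θ ≤
      max 0 (stdNormCDF (√n * (-η - θ)) - stdNormCDF (-(√n * b))) := by
  have hsub : hardThresh η ⁻¹' Icc (θ - b) (θ + a) ⊆ Icc (θ - b) (-η) := by
    intro y hy
    simp only [mem_preimage, mem_Icc, hardThresh] at hy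
    split_ifs at hy with hy'
    · exact ⟨hy.1, by cases abs_cases y <;> linarith⟩
    · linarith
  rw [cover_eq_real_preimage]
  refine (measureReal_mono hsub).trans ?_
  rcases le_or_gt (θ - b) (-η) with hle | hlt
  · rw [gaussianReal_real_Icc θ (inv_ne_zero (Nat.cast_ne_zero.2 hn)) hle, div_sqrt_natCast_inv,
      div_sqrt_natCast_inv, show θ - b - θ = -b by ring, mul_neg]
    exact le_max_right _ _
  · simp [Icc_eq_empty_of_lt hlt]

lemma iInf_cover_hardThresh_le (η a b : ℝ) :
    ⨅ θ, cover n (hardThresh η) a b θ ≤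
      max 0 (stdNormCDF (√n * (a - η)) - stdNormCDF (-(√n * b))) := by
  set g : ℝ → ℝ := fun θ => max 0 (stdNormCDF (√n * (-η - θ)) - stdNormCDF (-(√n * b)))
  have hg : Tendsto g (𝓝[<] (-a)) (𝓝 (g (-a))) := by
    refine (Continuous.tendsto ?_ _).mono_left nhdsWithin_le_nhds
    fun_prop
  have hbdd : BddBelow (range (cover n (hardThresh η) a b)) :=
    ⟨0, forall_mem_range.2 fun θ => measureReal_nonneg⟩
  have hlim := ge_of_tendsto hg (eventually_nhdsWithin_of_forall fun θ (hθ : θ < -a) =>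
    (ciInf_le hbdd θ).trans (cover_hardThresh_le_of_lt_neg hn η hθ))
  simpa [g, neg_add_eq_sub] using hlim

lemma hardCoverageLevel_le_cover_hardThresh_of_lt_neg {η a θ : ℝ} (hη : 0 ≤ η)
    (ha : η ≤ 2 * a) (hθ : θ < -a) :
    hardCoverageLevel n η a ≤ cover n (hardThresh η) a a θ := by
  have hsub : Ioo (θ - a) (min (θ + a) (-η)) ⊆ hardThresh η ⁻¹' Icc (θ - a) (θ + a) := by
    rintro y ⟨hy₁, hy₂⟩
    rw [lt_min_iff] at hy₂
    have hy : η < |y| := by rw [abs_of_neg (by linarith)]; linarith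
    simp only [mem_preimage, mem_Icc, hardThresh, if_pos hy]
    exact ⟨hy₁.le, hy₂.1.le⟩
  rw [cover_eq_real_preimage]
  refine le_trans ?_ (measureReal_mono hsub)
  rw [gaussianReal_real_Ioo θ (inv_ne_zero (Nat.cast_ne_zero.2 hn))
      (le_min (by linarith) (by linarith)),
    div_sqrt_natCast_inv, div_sqrt_natCast_inv, show θ - a - θ = -a by ring, mul_neg,
    hardCoverageLevel]
  gcongr
  refine stdNormCDF_strictMono.monotone (mul_le_mul_of_nonneg_left ?_ (Real.sqrt_nonneg _))
  rcases min_cases (θ + a) (-η) <;> linarith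

lemma hardCoverageLevel_le_cover_hardThresh {η a : ℝ} (hη : 0 ≤ η) (ha : η ≤ 2 * a)
    (θ : ℝ) :
    hardCoverageLevel n η a ≤ cover n (hardThresh η) a a θ := by
  rcases lt_or_ge θ (-a) with hθ | hθ₁
  · exact hardCoverageLevel_le_cover_hardThresh_of_lt_neg hn hη ha hθ
  rcases le_or_gt θ a with hθ₂ | hθ₂
  · have hsub : Icc (θ - a) (θ + a) ⊆ hardThresh η ⁻¹' Icc (θ - a) (θ + a) := by
      intro y hy
      simp only [mem_preimage, hardThresh]
      split_ifs
      · exact hy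
      · exact ⟨by linarith, by linarith⟩
    rw [cover_eq_real_preimage]
    refine le_trans ?_ (measureReal_mono hsub)
    rw [gaussianReal_real_Icc θ (inv_ne_zero (Nat.cast_ne_zero.2 hn)) (by linarith),
      div_sqrt_natCast_inv, div_sqrt_natCast_inv, show θ - a - θ = -a by ring,
      show θ + a - θ = a by ring, mul_neg, hardCoverageLevel]
    gcongr
    exact stdNormCDF_strictMono.monotone
      (mul_le_mul_of_nonneg_left (by linarith) (Real.sqrt_nonneg _))
  · rw [cover_hardThresh_swap]
    exact hardCoverageLevel_le_cover_hardThresh_of_lt_neg hn hη ha (by linarith)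

lemma lt_hardCoverageLevel_midpoint_of_lt {η δ a b : ℝ} (hη : 0 ≤ η) (hδ : 0 < δ)
    (hcov : δ ≤ ⨅ θ, cover n (hardThresh η) a b θ) (hab : a < b) :
    δ < hardCoverageLevel n η ((a + b) / 2) := by
  have hc : 0 < √(n : ℝ) := Real.sqrt_pos.2 (by positivity)
  have hδab : δ ≤ stdNormCDF (√n * (a - η)) - stdNormCDF (-(√n * b)) :=
    (le_max_iff.1 (hcov.trans (iInf_cover_hardThresh_le hn η a b))).resolve_left hδ.not_ge
  have hηab : η < a + b := by
    by_contra! h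
    have := stdNormCDF_strictMono.monotone (show √n * (a - η) ≤ -(√n * b) by nlinarith)
    linarith
  have hwin := stdNormCDF_window_lt (p := √n * (a - η)) (r := -(√n * b))
    (T := √n * ((b - a) / 2)) (by nlinarith) (by nlinarith) (by nlinarith)
  rw [show -(√n * b) + √n * ((b - a) / 2) = -(√n * ((a + b) / 2)) by ring,
    show √n * (a - η) + √n * ((b - a) / 2) = √n * ((a + b) / 2 - η) by ring] at hwin
  rw [hardCoverageLevel]
  linarith

lemma lt_hardCoverageLevel_midpoint {η δ a b : ℝ} (hη : 0 ≤ η) (hδ : 0 < δ)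
    (hcov : δ ≤ ⨅ θ, cover n (hardThresh η) a b θ) (hab : a ≠ b) :
    δ < hardCoverageLevel n η ((a + b) / 2) := by
  rcases hab.lt_or_gt with hab | hba
  · exact lt_hardCoverageLevel_midpoint_of_lt hn hη hδ hcov hab
  · rw [iInf_cover_hardThresh_swap] at hcov
    rw [add_comm]
    exact lt_hardCoverageLevel_midpoint_of_lt hn hη hδ hcov hba

lemma le_hardCoverageLevel_midpoint {η δ a b : ℝ} (hη : 0 ≤ η) (hδ : 0 < δ)
    (hcov : δ ≤ ⨅ θ, cover n (hardThresh η) a b θ) :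
    δ ≤ hardCoverageLevel n η ((a + b) / 2) := by
  rcases eq_or_ne a b with rfl | hab
  · rw [add_self_div_two]
    exact (le_max_iff.1 (hcov.trans (iInf_cover_hardThresh_le hn η a a))).resolve_left
      hδ.not_ge
  · exact (lt_hardCoverageLevel_midpoint hn hη hδ hcov hab).le

end Coverage

/-- Theorem 1(b): the shortest δ-level interval based on the hard-thresholding estimator. -/
theorem stmt_7 (n : ℕ) (hn : 1 ≤ n) (η : ℝ) (hη : 0 < η) (δ : ℝ) (hδ0 : 0 < δ)
    (hδ1 : δ < 1) :
    ∃ astar : ℝ, 0 ≤ astar ∧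
      -- `astar` solves the equation
      stdNormCDF (Real.sqrt n * (astar - η)) - stdNormCDF (-(Real.sqrt n * astar)) = δ ∧
      -- and it is the unique nonnegative solution
      (∀ a : ℝ, 0 ≤ a →
        stdNormCDF (Real.sqrt n * (a - η)) - stdNormCDF (-(Real.sqrt n * a)) = δ →
        a = astar) ∧
      -- it satisfies astar > η/2
      η / 2 < astar ∧
      -- the corresponding symmetric interval has infimal coverage probability exactly δ
      (⨅ θ : ℝ, cover n (hardThresh η) astar astar θ) = δ ∧
      -- among all intervals with infimal coverage probability ≥ δ,
      -- the length is minimized at (astar, astar) ...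
      (∀ a b : ℝ, 0 ≤ a → 0 ≤ b →
        δ ≤ (⨅ θ : ℝ, cover n (hardThresh η) a b θ) →
        astar + astar ≤ a + b) ∧
      -- ... and uniquely so
      (∀ a b : ℝ, 0 ≤ a → 0 ≤ b →
        δ ≤ (⨅ θ : ℝ, cover n (hardThresh η) a b θ) →
        a + b = astar + astar → a = astar ∧ b = astar) := by
  have hn₀ : n ≠ 0 := by omega
  obtain ⟨astar, hastar₀, hlevel⟩ := exists_hardCoverageLevel_eq hn₀ η hη.le hδ0 hδ1
  have hmono := hardCoverageLevel_strictMono hn₀ η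
  have hhalf : η / 2 < astar :=
    hmono.lt_iff_lt.1 (by rw [hardCoverageLevel_half, hlevel]; exact hδ0)
  refine ⟨astar, hastar₀, hlevel, fun a _ ha => hmono.injective (ha.trans hlevel.symm), hhalf,
    ?_, fun a b _ _ hcov => ?_, fun a b _ _ hcov hsum => ?_⟩
  · refine le_antisymm ?_
      (le_ciInf (hlevel ▸ hardCoverageLevel_le_cover_hardThresh hn₀ hη.le (by linarith)))
    have hle := iInf_cover_hardThresh_le hn₀ η astar astar
    change _ ≤ max 0 (hardCoverageLevel n η astar) at hle
    rwa [hlevel, max_eq_right hδ0.le] at hle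
  · have := hmono.le_iff_le.1 (hlevel ▸ le_hardCoverageLevel_midpoint hn₀ hη.le hδ0 hcov)
    linarith
  · obtain rfl : a = b := by
      by_contra hab
      have := lt_hardCoverageLevel_midpoint hn₀ hη.le hδ0 hcov hab
      rw [hsum, add_self_div_two, hlevel] at this
      exact this.false
    constructor <;> linarith
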